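/- arXiv:1303.4359 — 4 statements merged into one kernel-verified Lean document; each statement's English description precedes it below -/
import Mathlib

section
/- Let γ : ℝ → EuclideanSpace ℝ (Fin 3) be a curve and t₀ ∈ ℝ, and suppose that the normalized difference quotients converge: there is a vector v such that the function t ↦ ‖(t − t₀)⁻¹ • (γ(t) − γ(t₀))‖⁻¹ • ((t − t₀)⁻¹ • (γ(t) − γ(t₀))) tends to v as t → t₀ along the punctured neighborhood filter 𝓝[≠] t₀. Then the unit secant vectors t ↦ ‖γ(t) − γ(t₀)‖⁻¹ • (γ(t) − γ(t₀)) tend to v along 𝓝[>] t₀ and tend to −v along 𝓝[<] t₀; in particular the two one-sided limits exist and are collinear. -/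
open Filter Topology

lemma aux_smul_pos {E : Type*} [NormedAddCommGroup E] [NormedSpace ℝ E]
    (c : ℝ) (hc : 0 < c) (w : E) : ‖c • w‖⁻¹ • (c • w) = ‖w‖⁻¹ • w := by
  rcases eq_or_ne w 0 with rfl | hw
  · simp
  · rw [norm_smul, Real.norm_eq_abs, abs_of_pos hc, mul_inv, smul_smul]
    congr 1
    rw [mul_comm, ← mul_assoc, mul_inv_cancel₀ hc.ne', one_mul]

lemma aux_smul_neg {E : Type*} [NormedAddCommGroup E] [NormedSpace ℝ E]
    (c : ℝ) (hc : c < 0) (w : E) : ‖c • w‖⁻¹ • (c • w) = -(‖w‖⁻¹ • w) := by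
  rcases eq_or_ne w 0 with rfl | hw
  · simp
  · rw [norm_smul, Real.norm_eq_abs, abs_of_neg hc, mul_inv, smul_smul, ← neg_smul]
    congr 1
    rw [inv_neg, neg_mul, neg_mul, neg_inj, mul_comm, ← mul_assoc, mul_inv_cancel₀ hc.ne,
      one_mul]

theorem tangent_of_normalized_diff_quotient
    (γ : ℝ → EuclideanSpace ℝ (Fin 3)) (t₀ : ℝ) (v : EuclideanSpace ℝ (Fin 3))
    (h : Tendsto
      (fun t => ‖(t - t₀)⁻¹ • (γ t - γ t₀)‖⁻¹ • ((t - t₀)⁻¹ • (γ t - γ t₀)))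
      (𝓝[≠] t₀) (𝓝 v)) :
    Tendsto (fun t => ‖γ t - γ t₀‖⁻¹ • (γ t - γ t₀)) (𝓝[>] t₀) (𝓝 v) ∧
    Tendsto (fun t => ‖γ t - γ t₀‖⁻¹ • (γ t - γ t₀)) (𝓝[<] t₀) (𝓝 (-v)) := by
  constructor
  · have h1 : Tendsto
        (fun t => ‖(t - t₀)⁻¹ • (γ t - γ t₀)‖⁻¹ • ((t - t₀)⁻¹ • (γ t - γ t₀)))
        (𝓝[>] t₀) (𝓝 v) :=
      h.mono_left (nhdsWithin_mono t₀ (fun t ht => ne_of_gt ht))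
    refine h1.congr' ?_
    filter_upwards [self_mem_nhdsWithin] with t (ht : t₀ < t)
    exact aux_smul_pos _ (inv_pos.mpr (sub_pos.mpr ht)) _
  · have h1 : Tendsto
        (fun t => ‖(t - t₀)⁻¹ • (γ t - γ t₀)‖⁻¹ • ((t - t₀)⁻¹ • (γ t - γ t₀)))
        (𝓝[<] t₀) (𝓝 v) :=
      h.mono_left (nhdsWithin_mono t₀ (fun t ht => ne_of_lt ht))
    have h2 := h1.neg
    refine h2.congr' ?_
    filter_upwards [self_mem_nhdsWithin] with t (ht : t < t₀)
    rw [aux_smul_neg _ (inv_neg''.mpr (sub_neg.mpr ht)) _, neg_neg]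
end

section
/- Let f : ℝ → ℝ and x₀ ∈ ℝ, and suppose the difference quotient x ↦ (f(x) − f(x₀))/(x − x₀) tends to +∞ (the filter atTop) as x → x₀ along the punctured neighborhood filter 𝓝[≠] x₀. Then the unit secant vectors x ↦ ‖(x − x₀, f(x) − f(x₀))‖⁻¹ • (x − x₀, f(x) − f(x₀)) tend to (0, 1) along 𝓝[>] x₀ and tend to (0, −1) along 𝓝[<] x₀; in particular the graph of f has a vertical tangent at (x₀, f(x₀)). -/
/-!
For `x ≠ x₀` the secant vector is `(x - x₀) • (1, q x)`, where `q` is the difference quotient.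
Normalizing discards the positive factor `|x - x₀|` and keeps its sign, so the unit secant is
`± ‖(1, q x)‖⁻¹ • (1, q x)`. For `s > 0` the unit vector along `(1, s)` is also the one along
`(s⁻¹, 1)`, and as `s → ∞` this tends to `(0, 1)` by continuity of normalization away from `0`.
-/

open Filter Topology

/-- The plane `ℝ × ℝ` equipped with the Euclidean norm. -/
noncomputable abbrev EuclideanPlane := WithLp 2 (ℝ × ℝ)

/-- A point of the Euclidean plane with the given coordinates. -/
noncomputable def planePt (x y : ℝ) : EuclideanPlane := (WithLp.equiv 2 (ℝ × ℝ)).symm (x, y)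

section UnitVector

variable {E : Type*} [NormedAddCommGroup E] [NormedSpace ℝ E]

theorem inv_norm_smul_pos_smul {c : ℝ} (hc : 0 < c) (v : E) :
    ‖c • v‖⁻¹ • (c • v) = ‖v‖⁻¹ • v := by
  rw [norm_smul, Real.norm_of_nonneg hc.le, smul_smul, mul_inv_rev,
    inv_mul_cancel_right₀ hc.ne']

theorem inv_norm_smul_neg_smul {c : ℝ} (hc : c < 0) (v : E) :
    ‖c • v‖⁻¹ • (c • v) = -(‖v‖⁻¹ • v) := by
  rw [← neg_neg c, neg_smul, norm_neg, smul_neg, inv_norm_smul_pos_smul (neg_pos.2 hc)]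

theorem continuousAt_inv_norm_smul {v : E} (hv : v ≠ 0) :
    ContinuousAt (fun w : E => ‖w‖⁻¹ • w) v :=
  ((continuous_norm.continuousAt).inv₀ (norm_ne_zero_iff.2 hv)).smul continuousAt_id

end UnitVector

theorem continuous_planePt : Continuous fun p : ℝ × ℝ => planePt p.1 p.2 :=
  (WithLp.prodContinuousLinearEquiv 2 ℝ ℝ ℝ).symm.continuous

theorem smul_planePt (c a b : ℝ) : c • planePt a b = planePt (c * a) (c * b) := rfl

theorem neg_planePt (a b : ℝ) : -planePt a b = planePt (-a) (-b) := rfl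

theorem norm_planePt (a b : ℝ) : ‖planePt a b‖ = √(a ^ 2 + b ^ 2) := by
  rw [WithLp.prod_norm_eq_of_L2]
  simp [planePt, Real.norm_eq_abs, sq_abs]

theorem planePt_eq_smul_planePt_one {d : ℝ} (hd : d ≠ 0) (y : ℝ) :
    planePt d y = d • planePt 1 (y / d) := by
  rw [smul_planePt, mul_one, mul_div_cancel₀ y hd]

theorem tendsto_inv_norm_smul_planePt_one_atTop :
    Tendsto (fun s => ‖planePt 1 s‖⁻¹ • planePt 1 s) atTop (𝓝 (planePt 0 1)) := by
  have hunit : ‖planePt 0 1‖⁻¹ • planePt 0 1 = planePt 0 1 := by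
    simp [norm_planePt]
  have hcont : ContinuousAt (fun t => ‖planePt t 1‖⁻¹ • planePt t 1) 0 := by
    refine (continuousAt_inv_norm_smul ?_).comp
      (continuous_planePt.comp (continuous_id.prodMk continuous_const)).continuousAt
    rw [← norm_ne_zero_iff, norm_planePt]
    norm_num
  have hlim := hcont.tendsto.comp tendsto_inv_atTop_zero
  rw [hunit] at hlim
  refine hlim.congr' ?_
  filter_upwards [eventually_gt_atTop 0] with s hs
  rw [Function.comp_apply, ← inv_norm_smul_pos_smul hs, smul_planePt, mul_inv_cancel₀ hs.ne',
    mul_one]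

theorem graph_vertical_tangent_of_diff_quotient_atTop (f : ℝ → ℝ) (x₀ : ℝ)
    (h : Tendsto (fun x => (f x - f x₀) / (x - x₀)) (𝓝[≠] x₀) atTop) :
    Tendsto (fun x => ‖planePt (x - x₀) (f x - f x₀)‖⁻¹ • planePt (x - x₀) (f x - f x₀))
      (𝓝[>] x₀) (𝓝 (planePt 0 1)) ∧
    Tendsto (fun x => ‖planePt (x - x₀) (f x - f x₀)‖⁻¹ • planePt (x - x₀) (f x - f x₀))
      (𝓝[<] x₀) (𝓝 (planePt 0 (-1))) := by
  have hunit := tendsto_inv_norm_smul_planePt_one_atTop.comp h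
  constructor
  · refine (hunit.mono_left (nhdsGT_le_nhdsNE x₀)).congr' ?_
    filter_upwards [self_mem_nhdsWithin] with x (hx : x₀ < x)
    rw [planePt_eq_smul_planePt_one (sub_pos.2 hx).ne', inv_norm_smul_pos_smul (sub_pos.2 hx)]
    rfl
  · rw [show planePt 0 (-1) = -planePt 0 1 by rw [neg_planePt, neg_zero]]
    refine (hunit.neg.mono_left (nhdsLT_le_nhdsNE x₀)).congr' ?_
    filter_upwards [self_mem_nhdsWithin] with x (hx : x < x₀)
    rw [planePt_eq_smul_planePt_one (sub_neg.2 hx).ne, inv_norm_smul_neg_smul (sub_neg.2 hx)]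
    rfl
end

section
/- Let l be a filter on a type α with l ≠ ⊥ (l.NeBot), let g : α → ℝ, and suppose there exists v ∈ ℝ × ℝ such that the function x ↦ (Real.sqrt (1 + (g x)²))⁻¹ • ((1 : ℝ), g x) tends to v along l. Then there exists L : EReal such that the function x ↦ (g x : EReal) tends to L along l (that is, g converges to a finite limit, or to +∞, or to −∞, along l). -/
/-!
The second coordinate of the unit vector in the direction of `(1, t)` is `sin (arctan t)`,
so `arctan ∘ g = arcsin ∘ (second coordinate)` converges to some `θ ∈ [-π/2, π/2]`. Since `tan`
maps `(-π/2, π/2)` homeomorphically onto `ℝ` and tends to `∓∞` at the endpoints,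
`g = tan ∘ arctan ∘ g` converges in `EReal`.
-/

open Filter Topology Set Real

theorem EReal.exists_tendsto_coe_of_tendsto_arctan {α : Type*} {l : Filter α} {g : α → ℝ}
    {θ : ℝ} (hθ : θ ∈ Icc (-(π / 2)) (π / 2)) (h : Tendsto (fun x => arctan (g x)) l (𝓝 θ)) :
    ∃ L : EReal, Tendsto (fun x => (g x : EReal)) l (𝓝 L) := by
  have h_within : Tendsto (fun x => arctan (g x)) l (𝓝[Ioo (-(π / 2)) (π / 2)] θ) :=
    tendsto_nhdsWithin_iff.2 ⟨h, .of_forall fun x => arctan_mem_Ioo (g x)⟩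
  have hg : g = fun x => tan (arctan (g x)) := funext fun x => (tan_arctan (g x)).symm
  rcases hθ.1.eq_or_lt with rfl | hlow
  · refine ⟨⊥, EReal.tendsto_coe_nhds_bot_iff.2 ?_⟩
    rw [hg]
    exact tendsto_tan_neg_pi_div_two.comp
      (h_within.mono_right (nhdsWithin_mono _ Ioo_subset_Ioi_self))
  rcases hθ.2.lt_or_eq with hhigh | rfl
  · refine ⟨tan θ, EReal.tendsto_coe.2 ?_⟩
    rw [hg]
    exact (continuousOn_tan_Ioo θ ⟨hlow, hhigh⟩).tendsto.comp h_within
  · refine ⟨⊤, EReal.tendsto_coe_nhds_top_iff.2 ?_⟩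
    rw [hg]
    exact tendsto_tan_pi_div_two.comp
      (h_within.mono_right (nhdsWithin_mono _ Ioo_subset_Iio_self))

theorem slope_tendsto_ereal_of_unit_direction_tendsto_general {α : Type*} (l : Filter α)
    (g : α → ℝ)
    (h : ∃ v : ℝ × ℝ,
      Tendsto (fun x => (Real.sqrt (1 + (g x) ^ 2))⁻¹ • (((1 : ℝ), g x) : ℝ × ℝ)) l (𝓝 v)) :
    ∃ L : EReal, Tendsto (fun x => ((g x : EReal))) l (𝓝 L) := by
  obtain ⟨v, hv⟩ := h
  have h_snd : Tendsto (fun x => g x / √(1 + g x ^ 2)) l (𝓝 v.2) := by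
    simpa [div_eq_inv_mul] using hv.snd_nhds
  have h_arctan : Tendsto (fun x => arctan (g x)) l (𝓝 (arcsin v.2)) := by
    simpa only [Function.comp_def, ← arctan_eq_arcsin] using
      (continuous_arcsin.tendsto v.2).comp h_snd
  exact EReal.exists_tendsto_coe_of_tendsto_arctan
    ⟨neg_pi_div_two_le_arcsin v.2, arcsin_le_pi_div_two v.2⟩ h_arctan

theorem slope_tendsto_ereal_of_unit_direction_tendsto {α : Type*} (l : Filter α) [l.NeBot]
    (g : α → ℝ)
    (h : ∃ v : ℝ × ℝ,
      Tendsto (fun x => (Real.sqrt (1 + (g x) ^ 2))⁻¹ • (((1 : ℝ), g x) : ℝ × ℝ)) l (𝓝 v)) :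
    ∃ L : EReal, Tendsto (fun x => ((g x : EReal))) l (𝓝 L) :=
  slope_tendsto_ereal_of_unit_direction_tendsto_general l g h
end

section
/- Let f : ℝ → ℝ and x₀ ∈ ℝ. Suppose there exist vectors v, w ∈ ℝ × ℝ and a scalar c ∈ ℝ with w = c • v such that the unit secant vectors x ↦ ‖(x − x₀, f(x) − f(x₀))‖⁻¹ • (x − x₀, f(x) − f(x₀)) tend to v along 𝓝[>] x₀ and tend to w along 𝓝[<] x₀. Then either there exists L ∈ ℝ such that the difference quotient x ↦ (f(x) − f(x₀))/(x − x₀) tends to L along 𝓝[≠] x₀, or else the difference quotient tends to +∞ or to −∞ along 𝓝[>] x₀ and also tends to +∞ or to −∞ along 𝓝[<] x₀. -/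
open Filter Topology

/-!
The difference quotient at `x` is the ratio `u₂ / u₁` of the coordinates of the unit secant
vector `u`, and `u₁` has the sign of `x - x₀`. If the one-sided limit `v` of `u` has `v₁ ≠ 0`,
the quotient tends to `v₂ / v₁`; collinearity `w = c • v` (with `c ≠ 0` because `‖w‖ = 1`) makes
the two one-sided values agree. If `v₁ = 0`, then also `w₁ = 0`, while `v₂, w₂ ≠ 0` since both
limits are unit vectors, so on each side the quotient is a nonzero limit divided by a
sign-definite quantity tending to `0`, hence tends to `±∞`.
-/

theorem Filter.Tendsto.div_atTop_or_atBot {α 𝕜 : Type*} [Field 𝕜] [LinearOrder 𝕜]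
    [IsStrictOrderedRing 𝕜] [TopologicalSpace 𝕜] [OrderTopology 𝕜] {l : Filter α} {g h : α → 𝕜}
    {a : 𝕜}
    (hg : Tendsto g l (𝓝 a)) (ha : a ≠ 0) (hh : Tendsto h l (𝓝 0))
    (hsign : (∀ᶠ x in l, 0 < h x) ∨ ∀ᶠ x in l, h x < 0) :
    Tendsto (fun x => g x / h x) l atTop ∨ Tendsto (fun x => g x / h x) l atBot := by
  simp only [div_eq_mul_inv]
  rcases hsign with hpos | hneg
  · have hinv : Tendsto (fun x => (h x)⁻¹) l atTop :=
      (tendsto_nhdsWithin_iff.2 ⟨hh, hpos⟩).inv_tendsto_nhdsGT_zero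
    rcases ha.lt_or_gt with ha | ha
    · exact .inr (hg.neg_mul_atTop ha hinv)
    · exact .inl (hg.pos_mul_atTop ha hinv)
  · have hinv : Tendsto (fun x => (h x)⁻¹) l atBot :=
      (tendsto_nhdsWithin_iff.2 ⟨hh, hneg⟩).inv_tendsto_nhdsLT_zero
    rcases ha.lt_or_gt with ha | ha
    · exact .inl (hg.neg_mul_atBot ha hinv)
    · exact .inr (hg.pos_mul_atBot ha hinv)

section WithLpProd

variable {ι : Type*} {p : ENNReal} {α β : Type*} [TopologicalSpace α] [TopologicalSpace β]
  {l : Filter ι} {u : ι → WithLp p (α × β)} {v : WithLp p (α × β)}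

lemma Filter.Tendsto.withLp_fst (hu : Tendsto u l (𝓝 v)) :
    Tendsto (fun i => (u i).fst) l (𝓝 v.fst) :=
  ((WithLp.continuous_fst p α β).tendsto v).comp hu

lemma Filter.Tendsto.withLp_snd (hu : Tendsto u l (𝓝 v)) :
    Tendsto (fun i => (u i).snd) l (𝓝 v.snd) :=
  ((WithLp.continuous_snd p α β).tendsto v).comp hu

end WithLpProd

lemma planePt_ne_zero {a : ℝ} (b : ℝ) (ha : a ≠ 0) : planePt a b ≠ 0 :=
  fun h => ha (congrArg WithLp.fst h)

noncomputable def unitSecant (f : ℝ → ℝ) (x₀ x : ℝ) : EuclideanPlane :=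
  ‖planePt (x - x₀) (f x - f x₀)‖⁻¹ • planePt (x - x₀) (f x - f x₀)

section UnitSecant

variable {f : ℝ → ℝ} {x₀ x : ℝ} {l : Filter ℝ} {v : EuclideanPlane}

lemma norm_unitSecant (hx : x ≠ x₀) : ‖unitSecant f x₀ x‖ = 1 :=
  norm_smul_inv_norm (planePt_ne_zero _ (sub_ne_zero.2 hx))

lemma unitSecant_snd_div_fst (hx : x ≠ x₀) :
    (unitSecant f x₀ x).snd / (unitSecant f x₀ x).fst = (f x - f x₀) / (x - x₀) :=
  mul_div_mul_left _ _ (inv_ne_zero (norm_ne_zero_iff.2 (planePt_ne_zero _ (sub_ne_zero.2 hx))))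

lemma unitSecant_fst_pos (hx : x₀ < x) : 0 < (unitSecant f x₀ x).fst :=
  mul_pos (inv_pos.2 (norm_pos_iff.2 (planePt_ne_zero _ (sub_ne_zero.2 hx.ne'))))
    (sub_pos.2 hx)

lemma unitSecant_fst_neg (hx : x < x₀) : (unitSecant f x₀ x).fst < 0 :=
  mul_neg_of_pos_of_neg (inv_pos.2 (norm_pos_iff.2 (planePt_ne_zero _ (sub_ne_zero.2 hx.ne))))
    (sub_neg.2 hx)

lemma norm_eq_one_of_tendsto_unitSecant [l.NeBot] (hl : ∀ᶠ x in l, x ≠ x₀)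
    (hu : Tendsto (unitSecant f x₀) l (𝓝 v)) : ‖v‖ = 1 := by
  refine mem_sphere_zero_iff_norm.1 (Metric.isClosed_sphere.mem_of_tendsto hu ?_)
  exact hl.mono fun _ hx => mem_sphere_zero_iff_norm.2 (norm_unitSecant hx)

lemma tendsto_slope_of_tendsto_unitSecant (hl : ∀ᶠ x in l, x ≠ x₀)
    (hu : Tendsto (unitSecant f x₀) l (𝓝 v)) (hv : v.fst ≠ 0) :
    Tendsto (fun x => (f x - f x₀) / (x - x₀)) l (𝓝 (v.snd / v.fst)) :=
  (hu.withLp_snd.div hu.withLp_fst hv).congr' (hl.mono fun _ => unitSecant_snd_div_fst)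

lemma tendsto_slope_atTop_or_atBot_of_tendsto_unitSecant [l.NeBot]
    (hl : (∀ᶠ x in l, x₀ < x) ∨ ∀ᶠ x in l, x < x₀)
    (hu : Tendsto (unitSecant f x₀) l (𝓝 v)) (hv : v.fst = 0) :
    Tendsto (fun x => (f x - f x₀) / (x - x₀)) l atTop ∨
      Tendsto (fun x => (f x - f x₀) / (x - x₀)) l atBot := by
  have hne : ∀ᶠ x in l, x ≠ x₀ := hl.elim (·.mono fun _ => ne_of_gt) (·.mono fun _ => ne_of_lt)
  have hv₂ : v.snd ≠ 0 := by
    intro h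
    have := norm_eq_one_of_tendsto_unitSecant hne hu
    simp [WithLp.prod_norm_eq_of_L2, hv, h] at this
  have hslope : (fun x => (unitSecant f x₀ x).snd / (unitSecant f x₀ x).fst) =ᶠ[l]
      fun x => (f x - f x₀) / (x - x₀) := hne.mono fun _ => unitSecant_snd_div_fst
  rw [← tendsto_congr' hslope, ← tendsto_congr' hslope]
  refine hu.withLp_snd.div_atTop_or_atBot hv₂ (hv ▸ hu.withLp_fst) ?_
  exact hl.imp (·.mono fun _ => unitSecant_fst_pos) (·.mono fun _ => unitSecant_fst_neg)

end UnitSecant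

theorem extended_derivative_of_graph_tangent (f : ℝ → ℝ) (x₀ : ℝ)
    (v w : EuclideanPlane) (c : ℝ) (hw : w = c • v)
    (hright : Tendsto
      (fun x => ‖planePt (x - x₀) (f x - f x₀)‖⁻¹ • planePt (x - x₀) (f x - f x₀))
      (𝓝[>] x₀) (𝓝 v))
    (hleft : Tendsto
      (fun x => ‖planePt (x - x₀) (f x - f x₀)‖⁻¹ • planePt (x - x₀) (f x - f x₀))
      (𝓝[<] x₀) (𝓝 w)) :
    (∃ L : ℝ, Tendsto (fun x => (f x - f x₀) / (x - x₀)) (𝓝[≠] x₀) (𝓝 L)) ∨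
    ((Tendsto (fun x => (f x - f x₀) / (x - x₀)) (𝓝[>] x₀) atTop ∨
      Tendsto (fun x => (f x - f x₀) / (x - x₀)) (𝓝[>] x₀) atBot) ∧
     (Tendsto (fun x => (f x - f x₀) / (x - x₀)) (𝓝[<] x₀) atTop ∨
      Tendsto (fun x => (f x - f x₀) / (x - x₀)) (𝓝[<] x₀) atBot)) := by
  have hright' : ∀ᶠ x in 𝓝[>] x₀, x₀ < x := self_mem_nhdsWithin
  have hleft' : ∀ᶠ x in 𝓝[<] x₀, x < x₀ := self_mem_nhdsWithin
  have hc : c ≠ 0 := by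
    rintro rfl
    simpa [hw] using norm_eq_one_of_tendsto_unitSecant (hleft'.mono fun _ => ne_of_lt) hleft
  by_cases hv : v.fst = 0
  · have hw₁ : w.fst = 0 := by simp [hw, hv]
    exact .inr ⟨tendsto_slope_atTop_or_atBot_of_tendsto_unitSecant (.inl hright') hright hv,
      tendsto_slope_atTop_or_atBot_of_tendsto_unitSecant (.inr hleft') hleft hw₁⟩
  · have hw₁ : w.fst ≠ 0 := by simp [hw, hc, hv]
    have hslope : w.snd / w.fst = v.snd / v.fst := by simp [hw, mul_div_mul_left _ _ hc]
    refine .inl ⟨v.snd / v.fst, ?_⟩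
    rw [← nhdsLT_sup_nhdsGT, tendsto_sup]
    exact ⟨hslope ▸ tendsto_slope_of_tendsto_unitSecant (hleft'.mono fun _ => ne_of_lt) hleft hw₁,
      tendsto_slope_of_tendsto_unitSecant (hright'.mono fun _ => ne_of_gt) hright hv⟩
end
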